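/- (Proposition 6.6, pointwise decay of the low-frequency pressure) Let d ≥ 1 and 0 ≤ α < 1/2. There is a constant C > 0, depending only on d and α, with the following property. Let λ ≥ 1 and let G : ℝ^d → ℝ be measurable with |G(z)| ≤ λ^{-(d+1)} (1 + |z|/λ)^{-(d+1)} for all z. Let f, g : ℝ^d → ℝ be measurable with M_f := sup_{r ≥ 1} ( r^{-(d+2α)} ∫_{B(0,r)} |f|² )^{1/2} < ∞ and M_g := sup_{r ≥ 1} ( r^{-(d+2α)} ∫_{B(0,r)} |g|² )^{1/2} < ∞. Then for every x ∈ ℝ^d: ∫_{ℝ^d} |G(x−y)| |f(y)| |g(y)| dy ≤ C M_f M_g ( λ^{2α−1} + λ^{-(d+1)} (1 + |x|)^{d+2α} ). -/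

import Mathlib

/-!
Let `ν` be the measure with density `|f| |g|`. Cauchy–Schwarz on balls turns the two Morrey
bounds into the growth bound `ν (B(0,r)) ≤ M_f M_g r^{d+2α}` for `r ≥ 1`. The kernel satisfies
`|G(x-y)| ≤ (λ + |x-y|)^{-(d+1)} ≤ λ^{-(d+1)}`, so its superlevel set at height `t` lies in the ball
of radius `1 + |x| + t^{-1/(d+1)}`. By the layer-cake formula the integral is at most
`M_f M_g 2^{d+2α} ∫_0^{λ^{-(d+1)}} ((1+|x|)^{d+2α} + t^{-(d+2α)/(d+1)}) dt`; the second term is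
integrable at `0` exactly because `d + 2α < d + 1`, and it contributes `λ^{2α-1}`.
-/

open MeasureTheory Metric ENNReal

noncomputable section

/-- Local Morrey `L²` norm `sup_{r ≥ 1} ( r^{-(d+2α)} ∫_{B(0,r)} |f|² )^{1/2}`,
valued in `ℝ≥0∞`. -/
def morrey {d : ℕ} {F : Type*} [NormedAddCommGroup F] (α : ℝ)
    (f : EuclideanSpace ℝ (Fin d) → F) : ℝ≥0∞ :=
  ⨆ r : {r : ℝ // 1 ≤ r},
    ((∫⁻ x in ball (0 : EuclideanSpace ℝ (Fin d)) (r : ℝ), (‖f x‖₊ : ℝ≥0∞) ^ 2) /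
      ENNReal.ofReal ((r : ℝ) ^ ((d : ℝ) + 2 * α))) ^ ((1 : ℝ) / 2)

open Set

theorem lintegral_ofReal_eq_setLIntegral_Ioc_meas_lt {Ω : Type*} [MeasurableSpace Ω]
    (μ : Measure Ω) {h : Ω → ℝ} {T : ℝ} (h_nn : 0 ≤ᵐ[μ] h) (hh : AEMeasurable h μ)
    (h_le : ∀ ω, h ω ≤ T) :
    ∫⁻ ω, ENNReal.ofReal (h ω) ∂μ = ∫⁻ t in Ioc 0 T, μ {ω | t < h ω} := by
  have h_supp : (fun t => μ {ω | t < h ω}).support ⊆ Iic T := by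
    intro t ht
    obtain ⟨ω, hω⟩ := nonempty_of_measure_ne_zero ht
    exact (le_of_lt hω).trans (h_le ω)
  rw [lintegral_eq_lintegral_meas_lt μ h_nn hh, ← Ioi_inter_Iic, inter_comm,
    ← Measure.restrict_restrict measurableSet_Iic, setLIntegral_eq_of_support_subset h_supp]

theorem setLIntegral_Ioc_zero_rpow {r T : ℝ} (hr : -1 < r) (hT : 0 ≤ T) :
    ∫⁻ t in Ioc 0 T, ENNReal.ofReal (t ^ r) = ENNReal.ofReal (T ^ (r + 1) / (r + 1)) := by
  have h_int : IntegrableOn (fun t : ℝ => t ^ r) (Ioc 0 T) :=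
    (intervalIntegrable_iff_integrableOn_Ioc_of_le hT).mp
      (intervalIntegral.intervalIntegrable_rpow' hr)
  have h_nn : 0 ≤ᵐ[volume.restrict (Ioc (0 : ℝ) T)] fun t : ℝ => t ^ r := by
    filter_upwards [ae_restrict_mem measurableSet_Ioc] with t ht
    exact Real.rpow_nonneg ht.1.le _
  rw [← ofReal_integral_eq_lintegral_ofReal h_int h_nn, ← intervalIntegral.integral_of_le hT,
    integral_rpow (Or.inl hr), Real.zero_rpow (by linarith), sub_zero]

theorem Real.add_rpow_le_two_rpow_mul_rpow_add_rpow {a b p : ℝ} (ha : 0 ≤ a) (hb : 0 ≤ b)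
    (hp : 0 ≤ p) :
    (a + b) ^ p ≤ 2 ^ p * (a ^ p + b ^ p) := calc
  (a + b) ^ p ≤ (2 * max a b) ^ p := by
    gcongr
    linarith [le_max_left a b, le_max_right a b]
  _ = 2 ^ p * max a b ^ p := Real.mul_rpow zero_le_two (ha.trans (le_max_left a b))
  _ ≤ 2 ^ p * (a ^ p + b ^ p) := by
    gcongr
    rcases max_cases a b with ⟨hm, -⟩ | ⟨hm, -⟩ <;> rw [hm]
    · linarith [Real.rpow_nonneg hb p]
    · linarith [Real.rpow_nonneg ha p]

theorem Real.rpow_mul_one_add_div_rpow {lam s : ℝ} (hlam : 0 < lam) (hs : 0 ≤ s) (p : ℝ) :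
    lam ^ p * (1 + s / lam) ^ p = (lam + s) ^ p := by
  rw [← Real.mul_rpow hlam.le (by positivity), mul_one_add, mul_div_cancel₀ s hlam.ne']

section Morrey

variable {d : ℕ} {F : Type*} [NormedAddCommGroup F]

theorem lintegral_ball_rpow_two_rpow_half_le_morrey (α : ℝ) (f : EuclideanSpace ℝ (Fin d) → F)
    {r : ℝ} (hr : 1 ≤ r) :
    (∫⁻ y in ball 0 r, (‖f y‖₊ : ℝ≥0∞) ^ (2 : ℝ)) ^ ((1 : ℝ) / 2)
      ≤ morrey α f * ENNReal.ofReal (r ^ ((d : ℝ) + 2 * α)) ^ ((1 : ℝ) / 2) := by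
  set R := ENNReal.ofReal (r ^ ((d : ℝ) + 2 * α))
  have hR0 : R ≠ 0 := by
    simpa [R] using Real.rpow_pos_of_pos (zero_lt_one.trans_le hr) _
  simp_rw [ENNReal.rpow_two]
  set I := ∫⁻ y in ball (0 : EuclideanSpace ℝ (Fin d)) r, (‖f y‖₊ : ℝ≥0∞) ^ 2
  calc I ^ ((1 : ℝ) / 2) = (I / R * R) ^ ((1 : ℝ) / 2) := by
        rw [ENNReal.div_mul_cancel hR0 ofReal_ne_top]
    _ = (I / R) ^ ((1 : ℝ) / 2) * R ^ ((1 : ℝ) / 2) := ENNReal.mul_rpow_of_nonneg _ _ (by norm_num)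
    _ ≤ morrey α f * R ^ ((1 : ℝ) / 2) := by
        gcongr
        exact le_iSup_of_le (⟨r, hr⟩ : {r : ℝ // 1 ≤ r}) le_rfl

variable {G : Type*} [NormedAddCommGroup G]

theorem setLIntegral_ball_nnnorm_mul_le_morrey (α : ℝ) {f : EuclideanSpace ℝ (Fin d) → F}
    {g : EuclideanSpace ℝ (Fin d) → G} (hf : AEStronglyMeasurable f) (hg : AEStronglyMeasurable g)
    {r : ℝ} (hr : 1 ≤ r) :
    ∫⁻ y in ball 0 r, (‖f y‖₊ : ℝ≥0∞) * ‖g y‖₊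
      ≤ morrey α f * morrey α g * ENNReal.ofReal (r ^ ((d : ℝ) + 2 * α)) := by
  set R := ENNReal.ofReal (r ^ ((d : ℝ) + 2 * α))
  have hRR : R ^ ((1 : ℝ) / 2) * R ^ ((1 : ℝ) / 2) = R := by
    rw [← ENNReal.mul_rpow_of_nonneg _ _ (by norm_num), ← pow_two, ← ENNReal.rpow_natCast,
      ← ENNReal.rpow_mul]
    norm_num
  calc ∫⁻ y in ball 0 r, (‖f y‖₊ : ℝ≥0∞) * ‖g y‖₊
      ≤ (∫⁻ y in ball 0 r, (‖f y‖₊ : ℝ≥0∞) ^ (2 : ℝ)) ^ ((1 : ℝ) / 2) *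
          (∫⁻ y in ball 0 r, (‖g y‖₊ : ℝ≥0∞) ^ (2 : ℝ)) ^ ((1 : ℝ) / 2) :=
        ENNReal.lintegral_mul_le_Lp_mul_Lq _ Real.HolderConjugate.two_two
          hf.enorm.restrict hg.enorm.restrict
    _ ≤ morrey α f * R ^ ((1 : ℝ) / 2) * (morrey α g * R ^ ((1 : ℝ) / 2)) :=
        mul_le_mul' (lintegral_ball_rpow_two_rpow_half_le_morrey α f hr)
          (lintegral_ball_rpow_two_rpow_half_le_morrey α g hr)
    _ = morrey α f * morrey α g * R := by rw [mul_mul_mul_comm, hRR]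

end Morrey

section DecayingKernel

variable {E : Type*} [NormedAddCommGroup E] {h : E → ℝ} {x : E} {lam β : ℝ}

theorem superlevel_subset_ball (hlam : 0 < lam) (hβ : 0 < β)
    (h_le : ∀ y, h y ≤ (lam + ‖x - y‖) ^ (-β)) {t : ℝ} (ht : 0 < t) :
    {y | t < h y} ⊆ ball x (t ^ (-β)⁻¹) := by
  intro y hy
  have hdist : lam + ‖x - y‖ < t ^ (-β)⁻¹ :=
    (Real.lt_rpow_inv_iff_of_neg (by positivity) ht (neg_neg_of_pos hβ)).mpr
      (hy.trans_le (h_le y))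
  rw [mem_ball, dist_comm, dist_eq_norm]
  linarith

variable [MeasurableSpace E] {ν : Measure E} {A : ℝ≥0∞} {D : ℝ}

theorem measure_superlevel_le (hD : 0 ≤ D) (hν : ∀ r, 1 ≤ r → ν (ball 0 r) ≤ A * .ofReal (r ^ D))
    (hlam : 0 < lam) (hβ : 0 < β) (h_le : ∀ y, h y ≤ (lam + ‖x - y‖) ^ (-β)) {t : ℝ} (ht : 0 < t) :
    ν {y | t < h y}
      ≤ A * .ofReal (2 ^ D) * (.ofReal ((1 + ‖x‖) ^ D) + .ofReal (t ^ (-(D / β)))) := by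
  have hrad : (t ^ (-β)⁻¹) ^ D = t ^ (-(D / β)) := by
    rw [← Real.rpow_mul ht.le]
    ring_nf
  have h_one : 0 ≤ 1 + ‖x‖ := by positivity
  calc ν {y | t < h y} ≤ ν (ball 0 (1 + ‖x‖ + t ^ (-β)⁻¹)) :=
        measure_mono <| (superlevel_subset_ball hlam hβ h_le ht).trans <|
          ball_subset_ball' (by rw [dist_zero_right]; linarith)
    _ ≤ A * .ofReal ((1 + ‖x‖ + t ^ (-β)⁻¹) ^ D) := hν _ (by
        have : 0 ≤ t ^ (-β)⁻¹ := by positivity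
        linarith [norm_nonneg x])
    _ ≤ A * .ofReal (2 ^ D * ((1 + ‖x‖) ^ D + t ^ (-(D / β)))) := by
        gcongr
        rw [← hrad]
        exact Real.add_rpow_le_two_rpow_mul_rpow_add_rpow h_one (Real.rpow_nonneg ht.le _) hD
    _ = A * .ofReal (2 ^ D) * (.ofReal ((1 + ‖x‖) ^ D) + .ofReal (t ^ (-(D / β)))) := by
        rw [ENNReal.ofReal_mul (by positivity), ENNReal.ofReal_add (by positivity) (by positivity),
          mul_assoc]

theorem lintegral_ofReal_le_of_measure_ball_le (hD : 0 ≤ D) (hDβ : D < β)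
    (hν : ∀ r, 1 ≤ r → ν (ball 0 r) ≤ A * .ofReal (r ^ D)) (hlam : 0 < lam)
    (hh : AEMeasurable h ν) (h_nn : 0 ≤ h) (h_le : ∀ y, h y ≤ (lam + ‖x - y‖) ^ (-β)) :
    ∫⁻ y, .ofReal (h y) ∂ν
      ≤ A * .ofReal (2 ^ D * (lam ^ (-β) * (1 + ‖x‖) ^ D + β / (β - D) * lam ^ (D - β))) := by
  have hβ : 0 < β := hD.trans_lt hDβ
  have hT : ∀ y, h y ≤ lam ^ (-β) := fun y => (h_le y).trans
    (Real.rpow_le_rpow_of_nonpos hlam (by linarith [norm_nonneg (x - y)]) (by linarith))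
  have h_tail : ∫⁻ t in Ioc 0 (lam ^ (-β)), .ofReal (t ^ (-(D / β)))
      = .ofReal (β / (β - D) * lam ^ (D - β)) := by
    have h_exp : -(D / β) + 1 = (β - D) / β := by field_simp; ring
    have h_pow : -β * ((β - D) / β) = D - β := by field_simp; ring
    rw [setLIntegral_Ioc_zero_rpow (by rw [neg_lt_neg_iff]; exact (div_lt_one hβ).mpr hDβ)
      (by positivity), h_exp, ← Real.rpow_mul hlam.le, h_pow, div_div_eq_mul_div]
    congr 1
    ring
  rw [lintegral_ofReal_eq_setLIntegral_Ioc_meas_lt ν (ae_of_all _ h_nn) hh hT]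
  calc ∫⁻ t in Ioc 0 (lam ^ (-β)), ν {y | t < h y}
      ≤ ∫⁻ t in Ioc 0 (lam ^ (-β)),
          A * .ofReal (2 ^ D) * (.ofReal ((1 + ‖x‖) ^ D) + .ofReal (t ^ (-(D / β)))) :=
        setLIntegral_mono (by fun_prop) fun t ht => measure_superlevel_le hD hν hlam hβ h_le ht.1
    _ = A * .ofReal (2 ^ D) * (.ofReal ((1 + ‖x‖) ^ D) * .ofReal (lam ^ (-β))
          + .ofReal (β / (β - D) * lam ^ (D - β))) := by
        rw [lintegral_const_mul _ (by fun_prop), lintegral_add_left measurable_const,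
          setLIntegral_const, Real.volume_Ioc, sub_zero, h_tail]
    _ = A * .ofReal (2 ^ D * (lam ^ (-β) * (1 + ‖x‖) ^ D + β / (β - D) * lam ^ (D - β))) := by
        rw [← ENNReal.ofReal_mul (by positivity), ← ENNReal.ofReal_add (by positivity)
          (by have := sub_pos.mpr hDβ; positivity), mul_assoc, ← ENNReal.ofReal_mul (by positivity),
          mul_comm ((1 + ‖x‖) ^ D)]

end DecayingKernel

theorem low_frequency_pressure_decay_general (d : ℕ) (α : ℝ) (hα0 : 0 ≤ α)
    (hα : α < 1 / 2) :
    ∃ C : ℝ, 0 < C ∧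
      ∀ lam : ℝ, 1 ≤ lam →
      ∀ G : EuclideanSpace ℝ (Fin d) → ℝ, Measurable G →
        (∀ z, |G z| ≤ lam ^ (-((d : ℝ) + 1)) * (1 + ‖z‖ / lam) ^ (-((d : ℝ) + 1))) →
      ∀ f g : EuclideanSpace ℝ (Fin d) → ℝ, Measurable f → Measurable g →
        morrey α f < ⊤ → morrey α g < ⊤ →
        ∀ x : EuclideanSpace ℝ (Fin d),
          (∫⁻ y, ENNReal.ofReal |G (x - y)| * (‖f y‖₊ : ℝ≥0∞) * (‖g y‖₊ : ℝ≥0∞)) ≤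
            ENNReal.ofReal C * morrey α f * morrey α g *
              ENNReal.ofReal
                (lam ^ (2 * α - 1) + lam ^ (-((d : ℝ) + 1)) * (1 + ‖x‖) ^ ((d : ℝ) + 2 * α)) := by
  set D : ℝ := d + 2 * α
  set β : ℝ := d + 1
  have hD : 0 ≤ D := by positivity
  have hDβ : D < β := by linarith
  have hc : 1 ≤ β / (β - D) := by rw [le_div_iff₀ (by linarith)]; linarith
  refine ⟨2 ^ D * (β / (β - D)), by positivity, ?_⟩
  intro lam hlam G hG hG_le f g hf hg _ _ x
  have hlam0 : 0 < lam := by linarith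
  set ν := volume.withDensity fun y => (‖f y‖₊ : ℝ≥0∞) * ‖g y‖₊
  have hν : ∀ r, 1 ≤ r → ν (ball 0 r) ≤ morrey α f * morrey α g * .ofReal (r ^ D) := by
    intro r hr
    rw [withDensity_apply _ measurableSet_ball]
    exact setLIntegral_ball_nnnorm_mul_le_morrey α hf.aestronglyMeasurable
      hg.aestronglyMeasurable hr
  have h_kernel : ∀ y, |G (x - y)| ≤ (lam + ‖x - y‖) ^ (-β) := fun y =>
    (hG_le (x - y)).trans_eq (Real.rpow_mul_one_add_div_rpow hlam0 (norm_nonneg _) _)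
  have h_density : ∫⁻ y, .ofReal |G (x - y)| * ‖f y‖₊ * ‖g y‖₊ = ∫⁻ y, .ofReal |G (x - y)| ∂ν := by
    rw [lintegral_withDensity_eq_lintegral_mul _ (by fun_prop) (by fun_prop)]
    exact lintegral_congr fun y => by simp only [Pi.mul_apply]; ring
  rw [h_density, show 2 * α - 1 = D - β by ring]
  calc ∫⁻ y, .ofReal |G (x - y)| ∂ν
      ≤ morrey α f * morrey α g *
          .ofReal (2 ^ D * (lam ^ (-β) * (1 + ‖x‖) ^ D + β / (β - D) * lam ^ (D - β))) :=
        lintegral_ofReal_le_of_measure_ball_le hD hDβ hν hlam0 (by fun_prop)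
          (fun y => abs_nonneg _) h_kernel
    _ ≤ morrey α f * morrey α g *
          .ofReal (2 ^ D * (β / (β - D)) * (lam ^ (D - β) + lam ^ (-β) * (1 + ‖x‖) ^ D)) := by
        gcongr morrey α f * morrey α g * ENNReal.ofReal ?_
        nlinarith [mul_nonneg (by positivity : (0 : ℝ) ≤ 2 ^ D * lam ^ (-β) * (1 + ‖x‖) ^ D)
          (sub_nonneg.mpr hc)]
    _ = _ := by rw [ENNReal.ofReal_mul (by positivity)]; ring

/-- Proposition 6.6 (pointwise decay of the low-frequency pressure): if
`|G(z)| ≤ λ^{-(d+1)} (1+|z|/λ)^{-(d+1)}` then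
`∫ |G(x−y)||f(y)||g(y)| dy ≤ C M_f M_g ( λ^{2α−1} + λ^{-(d+1)} (1+|x|)^{d+2α} )`,
with `C` depending only on `d` and `α < 1/2`. -/
theorem low_frequency_pressure_decay (d : ℕ) (hd : 1 ≤ d) (α : ℝ) (hα0 : 0 ≤ α)
    (hα : α < 1 / 2) :
    ∃ C : ℝ, 0 < C ∧
      ∀ lam : ℝ, 1 ≤ lam →
      ∀ G : EuclideanSpace ℝ (Fin d) → ℝ, Measurable G →
        (∀ z, |G z| ≤ lam ^ (-((d : ℝ) + 1)) * (1 + ‖z‖ / lam) ^ (-((d : ℝ) + 1))) →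
      ∀ f g : EuclideanSpace ℝ (Fin d) → ℝ, Measurable f → Measurable g →
        morrey α f < ⊤ → morrey α g < ⊤ →
        ∀ x : EuclideanSpace ℝ (Fin d),
          (∫⁻ y, ENNReal.ofReal |G (x - y)| * (‖f y‖₊ : ℝ≥0∞) * (‖g y‖₊ : ℝ≥0∞)) ≤
            ENNReal.ofReal C * morrey α f * morrey α g *
              ENNReal.ofReal
                (lam ^ (2 * α - 1) + lam ^ (-((d : ℝ) + 1)) * (1 + ‖x‖) ^ ((d : ℝ) + 2 * α)) :=
  low_frequency_pressure_decay_general d α hα0 hα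

end
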